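/- Let U ∈ ℝ^{N×d} have rows u_1ᵀ,…,u_Nᵀ, let V ∈ ℝ^{d×d} be symmetric positive semidefinite with u_iᵀ V u_j ≥ 0 for all i ≠ j, and let z ∈ ℝ^d. Define M = M₁ + M₂ + M₃ with M₁ = Diag(u_iᵀ V u_i), M₂ = −(UVUᵀ − Diag(UVUᵀ)), M₃ = Diag(Σ_{j≠i} u_iᵀ V u_j). Then M is positive semidefinite, and the negative revenue θ ↦ −R(θ) = θᵀ Uᵀ M U θ − θᵀ Uᵀ U z is convex on ℝ^d. -/

import Mathlib

/-!
With `A = U V Uᵀ` the Gram matrix of the products in the `V`-inner product, the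
elasticity matrix is `M = Diag(Aᵢᵢ) + L(A)`, where `L(A) = Diag(row sums of A) − A` is
the weighted Laplacian. Its quadratic form is `½ ∑ᵢⱼ Aᵢⱼ (vᵢ − vⱼ)²`, in which the
diagonal of `A` cancels, so it is nonnegative when the cross terms `Aᵢⱼ` are; and
`Aᵢᵢ ≥ 0` because `V` is positive semidefinite. Hence `M` and `Uᵀ M U` are positive
semidefinite, and a positive semidefinite quadratic form minus a linear form is convex.
-/

namespace Matrix

variable {n : Type*} [Fintype n]

def weightedLaplacian {R : Type*} [Ring R] [DecidableEq n] (A : Matrix n n R) : Matrix n n R :=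
  diagonal (fun i => ∑ j, A i j) - A

theorem weightedLaplacian_eq_neg_offDiag_add {R : Type*} [Ring R] [DecidableEq n]
    (A : Matrix n n R) :
    A.weightedLaplacian =
      -(A - diagonal fun i => A i i) + diagonal fun i => ∑ j ∈ Finset.univ.erase i, A i j := by
  ext i j
  rcases eq_or_ne i j with rfl | hij
  · simp [weightedLaplacian, Finset.sum_erase_eq_sub]
  · simp [weightedLaplacian, hij]

omit [Fintype n] in
theorem mul_mul_transpose_apply {m R : Type*} [Fintype m] [CommSemiring R]
    (U : Matrix n m R) (V : Matrix m m R) (i j : n) :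
    (U * V * Uᵀ) i j = U i ⬝ᵥ V *ᵥ U j := by
  rw [mul_apply, dotProduct_mulVec]
  rfl

theorem two_mul_dotProduct_mulVec_weightedLaplacian {R : Type*} [CommRing R] [DecidableEq n]
    {A : Matrix n n R} (hA : Aᵀ = A) (v : n → R) :
    2 * (v ⬝ᵥ A.weightedLaplacian *ᵥ v) = ∑ i, ∑ j, A i j * (v i - v j) ^ 2 := by
  have hswap : ∑ i, ∑ j, A i j * v j ^ 2 = ∑ i, ∑ j, A i j * v i ^ 2 := by
    rw [Finset.sum_comm]
    exact Fintype.sum_congr _ _ fun i => Fintype.sum_congr _ _ fun j => by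
      rw [← transpose_apply A i j, hA]
  have hexpand : ∑ i, ∑ j, A i j * (v i - v j) ^ 2 = ∑ i, ∑ j, A i j * v i ^ 2
      + ∑ i, ∑ j, A i j * v j ^ 2 - 2 * ∑ i, ∑ j, v i * (A i j * v j) := by
    simp only [Finset.mul_sum, ← Finset.sum_add_distrib, ← Finset.sum_sub_distrib]
    exact Fintype.sum_congr _ _ fun i => Fintype.sum_congr _ _ fun j => by ring
  have hdiag :
      v ⬝ᵥ diagonal (fun i => ∑ j, A i j) *ᵥ v = ∑ i, ∑ j, A i j * v i ^ 2 := by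
    simp only [dotProduct, mulVec_diagonal, Finset.mul_sum, Finset.sum_mul]
    exact Fintype.sum_congr _ _ fun i => Fintype.sum_congr _ _ fun j => by ring
  have hoff : v ⬝ᵥ A *ᵥ v = ∑ i, ∑ j, v i * (A i j * v j) := by
    simp only [dotProduct, mulVec, Finset.mul_sum]
  rw [hexpand, hswap, weightedLaplacian, sub_mulVec, dotProduct_sub, hdiag, hoff]
  ring

theorem posSemidef_weightedLaplacian [DecidableEq n] {A : Matrix n n ℝ} (hA : A.IsHermitian)
    (hoff : ∀ i j, i ≠ j → 0 ≤ A i j) : A.weightedLaplacian.PosSemidef := by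
  have hAt : Aᵀ = A := by simpa using hA.eq
  refine PosSemidef.of_dotProduct_mulVec_nonneg ((isHermitian_diagonal _).sub hA) fun v => ?_
  have hsq : 0 ≤ ∑ i, ∑ j, A i j * (v i - v j) ^ 2 :=
    Finset.sum_nonneg fun i _ => Finset.sum_nonneg fun j _ => by
      rcases eq_or_ne i j with rfl | hij
      · simp
      · exact mul_nonneg (hoff i j hij) (sq_nonneg _)
  have := two_mul_dotProduct_mulVec_weightedLaplacian hAt v
  simp only [star_trivial]
  linarith

theorem PosSemidef.convexOn_dotProduct_mulVec {Q : Matrix n n ℝ} (hQ : Q.PosSemidef) :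
    ConvexOn ℝ Set.univ fun x => x ⬝ᵥ Q *ᵥ x := by
  refine ⟨convex_univ, fun x _ y _ a b ha hb hab => ?_⟩
  have hsymm : y ⬝ᵥ Q *ᵥ x = x ⬝ᵥ Q *ᵥ y := by
    rw [dotProduct_mulVec, ← mulVec_transpose, dotProduct_comm]
    simpa using congrArg (fun B => x ⬝ᵥ B *ᵥ y) hQ.isHermitian.eq
  -- the convexity defect is `a b (x - y)ᵀ Q (x - y)`
  have hdefect := hQ.dotProduct_mulVec_nonneg (x - y)
  simp only [star_trivial, mulVec_sub, dotProduct_sub, sub_dotProduct] at hdefect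
  simp only [smul_eq_mul, mulVec_add, mulVec_smul, dotProduct_add, add_dotProduct,
    smul_dotProduct, dotProduct_smul]
  obtain rfl : b = 1 - a := by linarith
  nlinarith [mul_nonneg ha hb]

end Matrix

open Matrix

/-- In the AFDLD model with unit elasticities, the attribute-elasticity
matrix `M = M₁ + M₂ + M₃` is positive semidefinite and the negative revenue
`θ ↦ θᵀ Uᵀ M U θ − θᵀ Uᵀ U z` is convex on `ℝ^d`. -/
theorem afdld_negRevenue_convex
    (N d : ℕ) (U : Matrix (Fin N) (Fin d) ℝ)
    (V : Matrix (Fin d) (Fin d) ℝ) (hV : V.PosSemidef)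
    (hVcross : ∀ i j, i ≠ j → 0 ≤ U i ⬝ᵥ V.mulVec (U j))
    (z : Fin d → ℝ)
    (M₁ M₂ M₃ : Matrix (Fin N) (Fin N) ℝ)
    (hM₁ : M₁ = Matrix.diagonal fun i => U i ⬝ᵥ V.mulVec (U i))
    (hM₂ : M₂ = -(U * V * Uᵀ - Matrix.diagonal fun i => (U * V * Uᵀ) i i))
    (hM₃ : M₃ = Matrix.diagonal fun i =>
      ∑ j ∈ Finset.univ.erase i, U i ⬝ᵥ V.mulVec (U j)) :
    (M₁ + M₂ + M₃).PosSemidef ∧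
    ConvexOn ℝ Set.univ
      (fun θ : Fin d → ℝ =>
        θ ⬝ᵥ (Uᵀ * (M₁ + M₂ + M₃) * U).mulVec θ - θ ⬝ᵥ (Uᵀ * U).mulVec z) := by
  set A := U * V * Uᵀ
  have hA : A.PosSemidef := by simpa using hV.mul_mul_conjTranspose_same U
  have hentry : ∀ i j, A i j = U i ⬝ᵥ V *ᵥ U j := mul_mul_transpose_apply U V
  have hM : M₁ + M₂ + M₃ = (diagonal fun i => A i i) + A.weightedLaplacian := by
    simp only [hM₁, hM₂, hM₃, ← hentry, add_assoc, weightedLaplacian_eq_neg_offDiag_add]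
  have hPSD : (M₁ + M₂ + M₃).PosSemidef := by
    rw [hM]
    refine (posSemidef_diagonal_iff.mpr fun i => hA.diag_nonneg).add
      (posSemidef_weightedLaplacian hA.isHermitian fun i j hij => ?_)
    exact (hentry i j).symm ▸ hVcross i j hij
  have hQ : (Uᵀ * (M₁ + M₂ + M₃) * U).PosSemidef := by
    simpa using hPSD.conjTranspose_mul_mul_same U
  exact ⟨hPSD, hQ.convexOn_dotProduct_mulVec.sub
    (((dotProductBilin ℝ ℝ).flip _).concaveOn convex_univ)⟩
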